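/- arXiv:1511.01340 — 8 statements merged into one kernel-verified Lean document; each statement's English description precedes it below -/
import Mathlib

section
/- Under the stated setup, if both |a| ≤ 1 and |b| ≤ 1, then the contact point ζ₃ lies on the ellipse with foci a and b: |ζ₃ − a| + |ζ₃ − b| = |1 − conj(a)·b|. -/
/-!
Write `B(z) = z (z - a)(z - b) / ((1 - ā z)(1 - b̄ z))`, so that the `zᵢ` solve `B = lam`, and put
`α = (1 - |a|²) / |z₃ - a|²`, `β = (1 - |b|²) / |z₃ - b|²`. Clearing denominators,
`(ζ₃ - a) N = -(z₁ - a)(z₂ - a)(z₃ - b)` with `N = (z₃ - z₁)(z₃ - z₂) - (z₃ - a)(z₃ - b)`.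
Since `(z₃ - z₁)(z₃ - z₂) = P'(z₃)` and `z₃ B'(z₃) / B(z₃) = 1 + α + β` on the unit circle,
`N = (z₃ - a)(z₃ - b)(α + β)`; together with `|(z₁ - a)(z₂ - a)(z₃ - a)| = |P(a)| = (1 - |a|²)|1 - ā b|`
this gives `|ζ₃ - a| = |1 - ā b| α / (α + β)`, and symmetrically `|ζ₃ - b| = |1 - ā b| β / (α + β)`.
-/

open Complex ComplexConjugate

section Algebra

variable {K : Type*} [Field K]

theorem sub_mul_sub_eq_of_forall_cubic_eq [CharZero K] {p q r z₁ z₂ z₃ : K}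
    (h : ∀ z, z ^ 3 + p * z ^ 2 + q * z + r = (z - z₁) * (z - z₂) * (z - z₃)) :
    (z₃ - z₁) * (z₃ - z₂) = 3 * z₃ ^ 2 + 2 * p * z₃ + q := by
  linear_combination (-z₃ - 1 / 2) * h 1 + (1 / 2 - z₃) * h (-1) + 2 * z₃ * h 0

variable {a b z₁ z₂ z₃ m₁ m₂ ζ : K}

/-- The partial-fraction identity `m₁ + m₂ + m₃ = 1` for `(z - a)(z - b) / ∏ (z - zᵢ)`. -/
theorem add_mul_eq_of_partial_fractions (h12 : z₁ ≠ z₂) (h13 : z₁ ≠ z₃) (h23 : z₂ ≠ z₃)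
    (hm1 : m₁ = (z₁ - a) * (z₁ - b) / ((z₁ - z₂) * (z₁ - z₃)))
    (hm2 : m₂ = (z₂ - a) * (z₂ - b) / ((z₂ - z₁) * (z₂ - z₃))) :
    (m₁ + m₂) * ((z₃ - z₁) * (z₃ - z₂)) = (z₃ - z₁) * (z₃ - z₂) - (z₃ - a) * (z₃ - b) := by
  subst hm1 hm2
  field_simp
  ring

theorem sub_mul_eq_of_weighted_point (h12 : z₁ ≠ z₂) (h13 : z₁ ≠ z₃) (h23 : z₂ ≠ z₃)
    (hm1 : m₁ = (z₁ - a) * (z₁ - b) / ((z₁ - z₂) * (z₁ - z₃)))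
    (hm2 : m₂ = (z₂ - a) * (z₂ - b) / ((z₂ - z₁) * (z₂ - z₃)))
    (hsum : m₁ + m₂ ≠ 0) (hζ : ζ = (m₁ * z₂ + m₂ * z₁) / (m₁ + m₂)) :
    (ζ - a) * ((z₃ - z₁) * (z₃ - z₂) - (z₃ - a) * (z₃ - b)) =
      -((z₁ - a) * (z₂ - a) * (z₃ - b)) := by
  have hζa : (ζ - a) * (m₁ + m₂) = m₁ * (z₂ - a) + m₂ * (z₁ - a) := by
    rw [hζ, div_sub' hsum, div_mul_cancel₀ _ hsum]
    ring
  rw [← add_mul_eq_of_partial_fractions h12 h13 h23 hm1 hm2, ← mul_assoc, hζa]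
  subst hm1 hm2
  field_simp
  ring

end Algebra

section UnitCircle

variable {a b lam z z₁ z₂ z₃ : ℂ}

theorem norm_one_sub_conj_mul_self (ha : ‖a‖ ≤ 1) : ‖1 - conj a * a‖ = 1 - ‖a‖ ^ 2 := by
  rw [conj_mul', ← ofReal_pow, ← ofReal_one, ← ofReal_sub, norm_real,
    Real.norm_of_nonneg (by nlinarith [norm_nonneg a])]

theorem norm_one_sub_conj_mul_comm (a b : ℂ) : ‖1 - conj b * a‖ = ‖1 - conj a * b‖ := by
  rw [← norm_conj]
  simp [mul_comm]

/- The left factor is `P'(z) - (z - a)(z - b)`; dividing by `|z - a|² |z - b|²` turns the identity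
into `z B'(z) / B(z) - 1 = α + β`. -/
theorem mul_conj_eq_of_blaschke_eq (hz : ‖z‖ = 1)
    (hroot : z * (z - a) * (z - b) = lam * (1 - conj a * z) * (1 - conj b * z)) :
    (z * (2 * z - a - b) + lam * (conj a + conj b - 2 * conj a * conj b * z)) *
        conj ((z - a) * (z - b)) =
      ((1 - ‖a‖ ^ 2) * ‖z - b‖ ^ 2 + (1 - ‖b‖ ^ 2) * ‖z - a‖ ^ 2 : ℝ) := by
  have hz0 : z ≠ 0 := by rintro rfl; simp at hz
  have hconj : conj z = z⁻¹ := (inv_eq_conj hz).symm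
  push_cast
  rw [← mul_conj' a, ← mul_conj' b, ← mul_conj' (z - a), ← mul_conj' (z - b)]
  simp only [map_sub, map_mul, hconj]
  field_simp
  linear_combination -(conj a + conj b - 2 * conj a * conj b * z) * hroot

theorem norm_deriv_sub_mul_norm_sub_mul_norm_sub (hz₃ : ‖z₃‖ = 1)
    (hP : ∀ z, z * (z - a) * (z - b) - lam * (1 - conj a * z) * (1 - conj b * z) =
      (z - z₁) * (z - z₂) * (z - z₃))
    (ha : ‖a‖ ≤ 1) (hb : ‖b‖ ≤ 1) :
    ‖(z₃ - z₁) * (z₃ - z₂) - (z₃ - a) * (z₃ - b)‖ * (‖z₃ - a‖ * ‖z₃ - b‖) =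
      (1 - ‖a‖ ^ 2) * ‖z₃ - b‖ ^ 2 + (1 - ‖b‖ ^ 2) * ‖z₃ - a‖ ^ 2 := by
  have hcubic : ∀ z, z ^ 3 + -(a + b + lam * conj a * conj b) * z ^ 2
      + (a * b + lam * (conj a + conj b)) * z + -lam = (z - z₁) * (z - z₂) * (z - z₃) :=
    fun z ↦ by linear_combination hP z
  have hderiv : (z₃ - z₁) * (z₃ - z₂) - (z₃ - a) * (z₃ - b) =
      z₃ * (2 * z₃ - a - b) + lam * (conj a + conj b - 2 * conj a * conj b * z₃) := by
    linear_combination sub_mul_sub_eq_of_forall_cubic_eq hcubic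
  have h := congrArg norm (mul_conj_eq_of_blaschke_eq (a := a) (b := b) (lam := lam) hz₃
    (by linear_combination hP z₃))
  rwa [← hderiv, norm_mul, norm_conj, norm_mul, norm_real, Real.norm_of_nonneg] at h
  have : 0 ≤ 1 - ‖a‖ ^ 2 := by nlinarith [norm_nonneg a]
  have : 0 ≤ 1 - ‖b‖ ^ 2 := by nlinarith [norm_nonneg b]
  positivity

theorem norm_prod_sub_roots (hlam : ‖lam‖ = 1)
    (hP : ∀ z, z * (z - a) * (z - b) - lam * (1 - conj a * z) * (1 - conj b * z) =
      (z - z₁) * (z - z₂) * (z - z₃))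
    (ha : ‖a‖ ≤ 1) :
    ‖z₁ - a‖ * ‖z₂ - a‖ * ‖z₃ - a‖ = (1 - ‖a‖ ^ 2) * ‖1 - conj a * b‖ := by
  rw [← norm_mul, ← norm_mul, (by linear_combination hP a :
    (z₁ - a) * (z₂ - a) * (z₃ - a) = lam * (1 - conj a * a) * (1 - conj b * a))]
  rw [norm_mul, norm_mul, hlam, one_mul, norm_one_sub_conj_mul_self ha,
    norm_one_sub_conj_mul_comm]

end UnitCircle

theorem stmt_0_general (a b lam z₁ z₂ z₃ m₁ m₂ ζ₃ : ℂ)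
    (hlam : ‖lam‖ = 1)
    (h12 : z₁ ≠ z₂) (h13 : z₁ ≠ z₃) (h23 : z₂ ≠ z₃)
    (hz3 : ‖z₃‖ = 1)
    (hP : ∀ z : ℂ,
      z * (z - a) * (z - b) - lam * (1 - (starRingEnd ℂ) a * z) * (1 - (starRingEnd ℂ) b * z)
        = (z - z₁) * (z - z₂) * (z - z₃))
    (ha3 : a ≠ z₃)
    (hb3 : b ≠ z₃)
    (hm1 : m₁ = (z₁ - a) * (z₁ - b) / ((z₁ - z₂) * (z₁ - z₃)))
    (hm2 : m₂ = (z₂ - a) * (z₂ - b) / ((z₂ - z₁) * (z₂ - z₃)))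
    (hsum : m₁ + m₂ ≠ 0)
    (hζ : ζ₃ = (m₁ * z₂ + m₂ * z₁) / (m₁ + m₂))
    (ha : ‖a‖ ≤ 1) (hb : ‖b‖ ≤ 1) :
    ‖ζ₃ - a‖ + ‖ζ₃ - b‖ = ‖1 - (starRingEnd ℂ) a * b‖ := by
  set N := (z₃ - z₁) * (z₃ - z₂) - (z₃ - a) * (z₃ - b) with hN_def
  have hN : N ≠ 0 := by
    rw [hN_def, ← add_mul_eq_of_partial_fractions h12 h13 h23 hm1 hm2]
    exact mul_ne_zero hsum (mul_ne_zero (sub_ne_zero.2 h13.symm) (sub_ne_zero.2 h23.symm))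
  have hNa : ‖ζ₃ - a‖ * ‖N‖ = ‖z₁ - a‖ * ‖z₂ - a‖ * ‖z₃ - b‖ := by
    simpa only [norm_mul, norm_neg] using
      congrArg norm (sub_mul_eq_of_weighted_point h12 h13 h23 hm1 hm2 hsum hζ)
  have hNb : ‖ζ₃ - b‖ * ‖N‖ = ‖z₁ - b‖ * ‖z₂ - b‖ * ‖z₃ - a‖ := by
    have h := sub_mul_eq_of_weighted_point (a := b) (b := a) h12 h13 h23
      (by rw [hm1, mul_comm (z₁ - a)]) (by rw [hm2, mul_comm (z₂ - a)]) hsum hζ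
    rw [mul_comm (z₃ - b)] at h
    simpa only [norm_mul, norm_neg] using congrArg norm h
  have hQ := norm_deriv_sub_mul_norm_sub_mul_norm_sub hz3 hP ha hb
  have hPa := norm_prod_sub_roots hlam hP ha
  have hPb := norm_prod_sub_roots (a := b) (b := a) (z₁ := z₁) (z₂ := z₂) (z₃ := z₃) hlam
    (fun z ↦ by linear_combination hP z) hb
  rw [norm_one_sub_conj_mul_comm] at hPb
  have hpos : ‖N‖ * (‖z₃ - a‖ * ‖z₃ - b‖) ≠ 0 := by
    simp [hN, sub_eq_zero, ha3.symm, hb3.symm]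
  refine mul_right_cancel₀ hpos ?_
  linear_combination (‖z₃ - a‖ * ‖z₃ - b‖) * (hNa + hNb) + ‖z₃ - b‖ ^ 2 * hPa
    + ‖z₃ - a‖ ^ 2 * hPb - ‖1 - conj a * b‖ * hQ

theorem stmt_0 (a b lam z₁ z₂ z₃ m₁ m₂ m₃ ζ₃ : ℂ)
    (hlam : ‖lam‖ = 1)
    (h12 : z₁ ≠ z₂) (h13 : z₁ ≠ z₃) (h23 : z₂ ≠ z₃)
    (hz1 : ‖z₁‖ = 1) (hz2 : ‖z₂‖ = 1) (hz3 : ‖z₃‖ = 1)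
    (hP : ∀ z : ℂ,
      z * (z - a) * (z - b) - lam * (1 - (starRingEnd ℂ) a * z) * (1 - (starRingEnd ℂ) b * z)
        = (z - z₁) * (z - z₂) * (z - z₃))
    (ha1 : a ≠ z₁) (ha2 : a ≠ z₂) (ha3 : a ≠ z₃)
    (hb1 : b ≠ z₁) (hb2 : b ≠ z₂) (hb3 : b ≠ z₃)
    (hm1 : m₁ = (z₁ - a) * (z₁ - b) / ((z₁ - z₂) * (z₁ - z₃)))
    (hm2 : m₂ = (z₂ - a) * (z₂ - b) / ((z₂ - z₁) * (z₂ - z₃)))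
    (hm3 : m₃ = (z₃ - a) * (z₃ - b) / ((z₃ - z₁) * (z₃ - z₂)))
    (hsum : m₁ + m₂ ≠ 0)
    (hζ : ζ₃ = (m₁ * z₂ + m₂ * z₁) / (m₁ + m₂))
    (ha : ‖a‖ ≤ 1) (hb : ‖b‖ ≤ 1) :
    ‖ζ₃ - a‖ + ‖ζ₃ - b‖ = ‖1 - (starRingEnd ℂ) a * b‖ :=
  stmt_0_general a b lam z₁ z₂ z₃ m₁ m₂ ζ₃ hlam h12 h13 h23 hz3 hP ha3 hb3 hm1 hm2 hsum hζ ha hb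
end

section
/- Under the stated setup, if additionally a ≠ z₃ and b ≠ z₃, then the reciprocal of the residue m₃ satisfies the real formula 1/m₃ = 1 + (1 − |a|²)/|z₃ − a|² + (1 − |b|²)/|z₃ − b|², i.e. the complex number (z₃ − z₁)(z₃ − z₂)/((z₃ − a)(z₃ − b)) equals the real number 1 + (1 − |a|²)/|z₃ − a|² + (1 − |b|²)/|z₃ − b|². -/
open Complex ComplexConjugate

/-!
The roots of `P_λ` are the points where the Blaschke product
`f z = z · (z - a)/(1 - conj a · z) · (z - b)/(1 - conj b · z)` takes the value `λ`, so at a root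
`z₃` we have `(z₃ - z₁)(z₃ - z₂) = P_λ'(z₃) = (z₃ - a)(z₃ - b) · z₃ f'(z₃)/f(z₃)`.
On the unit circle each Blaschke factor contributes its Poisson kernel `(1 - |a|²)/|z - a|²`
to `z f'/f`, and the factor `z` contributes `1`.
-/

lemma hasDerivAt_mul_sub_mul_sub_mul_sub {𝕜 : Type*} [NontriviallyNormedField 𝕜] (z₁ z₂ z₃ : 𝕜) :
    HasDerivAt (fun z => (z - z₁) * (z - z₂) * (z - z₃)) ((z₃ - z₁) * (z₃ - z₂)) z₃ := by
  have h : ∀ c : 𝕜, HasDerivAt (fun z => z - c) 1 z₃ := fun c => (hasDerivAt_id z₃).sub_const c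
  exact (((h z₁).fun_mul (h z₂)).fun_mul (h z₃)).congr_deriv (by ring)

lemma one_sub_conj_mul_eq_mul_conj_sub {z : ℂ} (hz : ‖z‖ = 1) (a : ℂ) :
    1 - conj a * z = z * conj (z - a) := by
  have hzz : z * conj z = 1 := by simp [mul_conj', hz]
  rw [map_sub]
  linear_combination -hzz

lemma one_sub_conj_mul_ne_zero {z a : ℂ} (hz : ‖z‖ = 1) (ha : z ≠ a) : 1 - conj a * z ≠ 0 := by
  have hz0 : z ≠ 0 := by rintro rfl; simp at hz
  rw [one_sub_conj_mul_eq_mul_conj_sub hz]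
  exact mul_ne_zero hz0 ((map_ne_zero _).mpr (sub_ne_zero.mpr ha))

/-- `z` times the logarithmic derivative of the Blaschke factor `(z - a)/(1 - conj a · z)` is the
Poisson kernel on the unit circle. -/
lemma div_sub_add_conj_mul_div_one_sub_conj_mul {z a : ℂ} (hz : ‖z‖ = 1) (ha : z ≠ a) :
    z / (z - a) + conj a * z / (1 - conj a * z) = ((1 - ‖a‖ ^ 2) / ‖z - a‖ ^ 2 : ℝ) := by
  have hza : z - a ≠ 0 := sub_ne_zero.mpr ha
  have hza' : conj (z - a) ≠ 0 := (map_ne_zero _).mpr hza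
  have hz0 : z ≠ 0 := by rintro rfl; simp at hz
  have hzz : z * conj z = 1 := by simp [mul_conj', hz]
  rw [one_sub_conj_mul_eq_mul_conj_sub hz, ofReal_div, ofReal_sub, ofReal_one, ofReal_pow,
    ofReal_pow, ← mul_conj', ← mul_conj']
  field_simp
  rw [map_sub]
  linear_combination hzz

/-- The polynomial `P_λ`. -/
def blaschkeCubic (a b lam z : ℂ) : ℂ :=
  z * (z - a) * (z - b) - lam * (1 - conj a * z) * (1 - conj b * z)

lemma hasDerivAt_blaschkeCubic (a b lam z : ℂ) :
    HasDerivAt (blaschkeCubic a b lam)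
      ((z - a) * (z - b) + z * (z - b) + z * (z - a)
        + lam * (conj a * (1 - conj b * z) + conj b * (1 - conj a * z))) z := by
  have h : ∀ c : ℂ, HasDerivAt (fun z => z - c) 1 z := fun c => (hasDerivAt_id z).sub_const c
  have h' : ∀ c : ℂ, HasDerivAt (fun z => 1 - c * z) (-c) z := fun c => by
    simpa using ((hasDerivAt_id z).const_mul c).const_sub 1
  exact ((((hasDerivAt_id' z).fun_mul (h a)).fun_mul (h b)).fun_sub
    (((h' (conj a)).const_mul lam).fun_mul (h' (conj b)))).congr_deriv (by ring)

lemma hasDerivAt_blaschkeCubic_of_eq_zero {a b lam z : ℂ} (hz : ‖z‖ = 1) (ha : z ≠ a)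
    (hb : z ≠ b) (hroot : blaschkeCubic a b lam z = 0) :
    HasDerivAt (blaschkeCubic a b lam) ((z - a) * (z - b) *
      ((1 + (1 - ‖a‖ ^ 2) / ‖z - a‖ ^ 2 + (1 - ‖b‖ ^ 2) / ‖z - b‖ ^ 2 : ℝ) : ℂ)) z := by
  have hza : z - a ≠ 0 := sub_ne_zero.mpr ha
  have hzb : z - b ≠ 0 := sub_ne_zero.mpr hb
  have hRa := one_sub_conj_mul_ne_zero hz ha
  have hRb := one_sub_conj_mul_ne_zero hz hb
  -- At a root, `λ = z (z - a)(z - b) / ((1 - conj a · z)(1 - conj b · z))`.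
  have hlogDeriv : (z - a) * (z - b) + z * (z - b) + z * (z - a)
        + lam * (conj a * (1 - conj b * z) + conj b * (1 - conj a * z))
      = (z - a) * (z - b) * (1 + (z / (z - a) + conj a * z / (1 - conj a * z))
          + (z / (z - b) + conj b * z / (1 - conj b * z))) := by
    unfold blaschkeCubic at hroot
    generalize 1 - conj a * z = A at *
    generalize 1 - conj b * z = B at *
    field_simp
    linear_combination -(conj a * B + conj b * A) * hroot
  refine (hasDerivAt_blaschkeCubic a b lam z).congr_deriv ?_
  rw [hlogDeriv, div_sub_add_conj_mul_div_one_sub_conj_mul hz ha,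
    div_sub_add_conj_mul_div_one_sub_conj_mul hz hb]
  push_cast
  ring

theorem stmt_3_general (a b lam z₁ z₂ z₃ : ℂ)
    (hz3 : ‖z₃‖ = 1)
    (hP : ∀ z : ℂ,
      z * (z - a) * (z - b) - lam * (1 - (starRingEnd ℂ) a * z) * (1 - (starRingEnd ℂ) b * z)
        = (z - z₁) * (z - z₂) * (z - z₃))
    (ha3 : a ≠ z₃) (hb3 : b ≠ z₃) :
    (z₃ - z₁) * (z₃ - z₂) / ((z₃ - a) * (z₃ - b))
      = ((1 + (1 - ‖a‖ ^ 2) / ‖z₃ - a‖ ^ 2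
            + (1 - ‖b‖ ^ 2) / ‖z₃ - b‖ ^ 2 : ℝ) : ℂ) := by
  have hfactor : blaschkeCubic a b lam = fun z => (z - z₁) * (z - z₂) * (z - z₃) := funext hP
  have hroot : blaschkeCubic a b lam z₃ = 0 := by simp [hfactor]
  have hderiv := (hasDerivAt_blaschkeCubic_of_eq_zero hz3 ha3.symm hb3.symm hroot).unique
    (hfactor ▸ hasDerivAt_mul_sub_mul_sub_mul_sub z₁ z₂ z₃)
  have hQ : (z₃ - a) * (z₃ - b) ≠ 0 :=
    mul_ne_zero (sub_ne_zero.mpr ha3.symm) (sub_ne_zero.mpr hb3.symm)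
  rw [div_eq_iff hQ, ← hderiv, mul_comm]

theorem stmt_3 (a b lam z₁ z₂ z₃ : ℂ)
    (hlam : ‖lam‖ = 1)
    (h12 : z₁ ≠ z₂) (h13 : z₁ ≠ z₃) (h23 : z₂ ≠ z₃)
    (hz1 : ‖z₁‖ = 1) (hz2 : ‖z₂‖ = 1) (hz3 : ‖z₃‖ = 1)
    (hP : ∀ z : ℂ,
      z * (z - a) * (z - b) - lam * (1 - (starRingEnd ℂ) a * z) * (1 - (starRingEnd ℂ) b * z)
        = (z - z₁) * (z - z₂) * (z - z₃))
    (ha3 : a ≠ z₃) (hb3 : b ≠ z₃) :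
    (z₃ - z₁) * (z₃ - z₂) / ((z₃ - a) * (z₃ - b))
      = ((1 + (1 - ‖a‖ ^ 2) / ‖z₃ - a‖ ^ 2
            + (1 - ‖b‖ ^ 2) / ‖z₃ - b‖ ^ 2 : ℝ) : ℂ) :=
  stmt_3_general a b lam z₁ z₂ z₃ hz3 hP ha3 hb3
end

section
/- Under the stated setup, if additionally a is distinct from z₁, z₂ and z₃ and m₃ ≠ 1, then ζ₃ − a = (m₃/(1 − m₃)) · (a − z₁)(a − z₂)/(a − z₃). -/
/-!
`m₁, m₂, m₃` are the Lagrange coefficients of the monic quadratic `(z - a)(z - b)` at the nodes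
`z₁, z₂, z₃`. Comparing leading coefficients gives `m₁ + m₂ + m₃ = 1`, and evaluating the
interpolation identity at the root `a` gives
`m₁ (a - z₂)(a - z₃) + m₂ (a - z₁)(a - z₃) + m₃ (a - z₁)(a - z₂) = 0`;
the formula for `ζ₃ - a` is a rearrangement of these two relations.
-/

section QuadraticInterpolation

variable {K : Type*} [Field K] {a b x y z : K}

theorem quadratic_lagrange_weights_sum (hxy : x ≠ y) (hxz : x ≠ z) (hyz : y ≠ z) :
    (x - a) * (x - b) / ((x - y) * (x - z)) + (y - a) * (y - b) / ((y - x) * (y - z))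
      + (z - a) * (z - b) / ((z - x) * (z - y)) = 1 := by
  field_simp [sub_ne_zero.mpr hxy, sub_ne_zero.mpr hxz, sub_ne_zero.mpr hyz,
    sub_ne_zero.mpr hxy.symm, sub_ne_zero.mpr hxz.symm, sub_ne_zero.mpr hyz.symm]
  ring

theorem quadratic_lagrange_interpolation (hxy : x ≠ y) (hxz : x ≠ z) (hyz : y ≠ z) (w : K) :
    (x - a) * (x - b) / ((x - y) * (x - z)) * ((w - y) * (w - z))
      + (y - a) * (y - b) / ((y - x) * (y - z)) * ((w - x) * (w - z))
      + (z - a) * (z - b) / ((z - x) * (z - y)) * ((w - x) * (w - y)) = (w - a) * (w - b) := by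
  field_simp [sub_ne_zero.mpr hxy, sub_ne_zero.mpr hxz, sub_ne_zero.mpr hyz,
    sub_ne_zero.mpr hxy.symm, sub_ne_zero.mpr hxz.symm, sub_ne_zero.mpr hyz.symm]
  ring

end QuadraticInterpolation

theorem stmt_6_general (a b z₁ z₂ z₃ m₁ m₂ m₃ ζ₃ : ℂ)
    (h12 : z₁ ≠ z₂) (h13 : z₁ ≠ z₃) (h23 : z₂ ≠ z₃)
    (hm1 : m₁ = (z₁ - a) * (z₁ - b) / ((z₁ - z₂) * (z₁ - z₃)))
    (hm2 : m₂ = (z₂ - a) * (z₂ - b) / ((z₂ - z₁) * (z₂ - z₃)))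
    (hm3 : m₃ = (z₃ - a) * (z₃ - b) / ((z₃ - z₁) * (z₃ - z₂)))
    (hζ : ζ₃ = (m₁ * z₂ + m₂ * z₁) / (m₁ + m₂))
    (ha3 : a ≠ z₃)
    (hm3ne : m₃ ≠ 1) :
    ζ₃ - a = m₃ / (1 - m₃) * ((a - z₁) * (a - z₂) / (a - z₃)) := by
  have hm_sum : m₁ + m₂ = 1 - m₃ := by
    rw [eq_sub_iff_add_eq, hm1, hm2, hm3, quadratic_lagrange_weights_sum h12 h13 h23]
  have hinterp : m₁ * ((a - z₂) * (a - z₃)) + m₂ * ((a - z₁) * (a - z₃))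
      + m₃ * ((a - z₁) * (a - z₂)) = 0 := by
    rw [hm1, hm2, hm3, quadratic_lagrange_interpolation h12 h13 h23 a, sub_self, zero_mul]
  have h1m3 : 1 - m₃ ≠ 0 := sub_ne_zero.mpr hm3ne.symm
  have ha3' : a - z₃ ≠ 0 := sub_ne_zero.mpr ha3
  rw [hζ, hm_sum]
  field_simp
  linear_combination (-1 : ℂ) * hinterp + a * (a - z₃) * hm_sum

theorem stmt_6 (a b lam z₁ z₂ z₃ m₁ m₂ m₃ ζ₃ : ℂ)
    (hlam : ‖lam‖ = 1)
    (h12 : z₁ ≠ z₂) (h13 : z₁ ≠ z₃) (h23 : z₂ ≠ z₃)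
    (hz1 : ‖z₁‖ = 1) (hz2 : ‖z₂‖ = 1) (hz3 : ‖z₃‖ = 1)
    (hP : ∀ z : ℂ,
      z * (z - a) * (z - b) - lam * (1 - (starRingEnd ℂ) a * z) * (1 - (starRingEnd ℂ) b * z)
        = (z - z₁) * (z - z₂) * (z - z₃))
    (hm1 : m₁ = (z₁ - a) * (z₁ - b) / ((z₁ - z₂) * (z₁ - z₃)))
    (hm2 : m₂ = (z₂ - a) * (z₂ - b) / ((z₂ - z₁) * (z₂ - z₃)))
    (hm3 : m₃ = (z₃ - a) * (z₃ - b) / ((z₃ - z₁) * (z₃ - z₂)))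
    (hsum : m₁ + m₂ ≠ 0)
    (hζ : ζ₃ = (m₁ * z₂ + m₂ * z₁) / (m₁ + m₂))
    (ha1 : a ≠ z₁) (ha2 : a ≠ z₂) (ha3 : a ≠ z₃)
    (hm3ne : m₃ ≠ 1) :
    ζ₃ - a = m₃ / (1 - m₃) * ((a - z₁) * (a - z₂) / (a - z₃)) :=
  stmt_6_general a b z₁ z₂ z₃ m₁ m₂ m₃ ζ₃ h12 h13 h23 hm1 hm2 hm3 hζ ha3 hm3ne
end

section
/- Under the stated setup, if additionally b is distinct from z₁, z₂ and z₃ and m₃ ≠ 1, then ζ₃ − b = (m₃/(1 − m₃)) · (b − z₁)(b − z₂)/(b − z₃). -/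
/-!
The weights `m₁, m₂, m₃` are the coefficients of the Lagrange interpolation of the monic quadratic
`(z - a) * (z - b)` at the nodes `z₁, z₂, z₃`. Comparing leading coefficients gives
`m₁ + m₂ = 1 - m₃`, and evaluating the interpolation at the root `z = b` gives, after clearing
denominators, exactly the claimed formula for `ζ₃ - b`.
-/

section LagrangeWeight

variable {K : Type*} [Field K]

/-- The coefficient of `(z - y) * (z - w)` in the Lagrange interpolation of `(z - a) * (z - b)`
at the nodes `x, y, w`. -/
def lagrangeWeight (a b x y w : K) : K := (x - a) * (x - b) / ((x - y) * (x - w))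

variable {a b x y w : K}

theorem lagrangeWeight_interpolates (hxy : x ≠ y) (hxw : x ≠ w) (hyw : y ≠ w) (z : K) :
    (z - a) * (z - b) =
      lagrangeWeight a b x y w * ((z - y) * (z - w)) +
        lagrangeWeight a b y x w * ((z - x) * (z - w)) +
          lagrangeWeight a b w x y * ((z - x) * (z - y)) := by
  unfold lagrangeWeight
  field_simp
  ring

theorem lagrangeWeight_add_add (hxy : x ≠ y) (hxw : x ≠ w) (hyw : y ≠ w) :
    lagrangeWeight a b x y w + lagrangeWeight a b y x w + lagrangeWeight a b w x y = 1 := by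
  unfold lagrangeWeight
  field_simp
  ring

end LagrangeWeight

theorem weightedMean_sub_eq {K : Type*} [Field K] {m₁ m₂ m₃ b z₁ z₂ z₃ : K}
    (hsum : m₁ + m₂ + m₃ = 1) (h₁₂ : m₁ + m₂ ≠ 0) (hb : b ≠ z₃)
    (hroot : m₁ * ((b - z₂) * (b - z₃)) + m₂ * ((b - z₁) * (b - z₃)) +
      m₃ * ((b - z₁) * (b - z₂)) = 0) :
    (m₁ * z₂ + m₂ * z₁) / (m₁ + m₂) - b = m₃ / (1 - m₃) * ((b - z₁) * (b - z₂) / (b - z₃)) := by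
  have h₃ : 1 - m₃ = m₁ + m₂ := by linear_combination -hsum
  have hb' : b - z₃ ≠ 0 := sub_ne_zero.mpr hb
  rw [h₃, div_mul_div_comm, div_sub' h₁₂, div_eq_div_iff h₁₂ (mul_ne_zero h₁₂ hb')]
  linear_combination (-(m₁ + m₂)) * hroot

theorem stmt_7_general (a b z₁ z₂ z₃ m₁ m₂ m₃ ζ₃ : ℂ)
    (h12 : z₁ ≠ z₂) (h13 : z₁ ≠ z₃) (h23 : z₂ ≠ z₃)
    (hm1 : m₁ = (z₁ - a) * (z₁ - b) / ((z₁ - z₂) * (z₁ - z₃)))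
    (hm2 : m₂ = (z₂ - a) * (z₂ - b) / ((z₂ - z₁) * (z₂ - z₃)))
    (hm3 : m₃ = (z₃ - a) * (z₃ - b) / ((z₃ - z₁) * (z₃ - z₂)))
    (hsum : m₁ + m₂ ≠ 0)
    (hζ : ζ₃ = (m₁ * z₂ + m₂ * z₁) / (m₁ + m₂))
    (hb3 : b ≠ z₃) :
    ζ₃ - b = m₃ / (1 - m₃) * ((b - z₁) * (b - z₂) / (b - z₃)) := by
  subst hζ hm1 hm2 hm3
  have hroot := lagrangeWeight_interpolates (a := a) (b := b) h12 h13 h23 b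
  rw [sub_self, mul_zero] at hroot
  exact weightedMean_sub_eq (lagrangeWeight_add_add h12 h13 h23) hsum hb3 hroot.symm

theorem stmt_7 (a b lam z₁ z₂ z₃ m₁ m₂ m₃ ζ₃ : ℂ)
    (hlam : ‖lam‖ = 1)
    (h12 : z₁ ≠ z₂) (h13 : z₁ ≠ z₃) (h23 : z₂ ≠ z₃)
    (hz1 : ‖z₁‖ = 1) (hz2 : ‖z₂‖ = 1) (hz3 : ‖z₃‖ = 1)
    (hP : ∀ z : ℂ,
      z * (z - a) * (z - b) - lam * (1 - (starRingEnd ℂ) a * z) * (1 - (starRingEnd ℂ) b * z)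
        = (z - z₁) * (z - z₂) * (z - z₃))
    (hm1 : m₁ = (z₁ - a) * (z₁ - b) / ((z₁ - z₂) * (z₁ - z₃)))
    (hm2 : m₂ = (z₂ - a) * (z₂ - b) / ((z₂ - z₁) * (z₂ - z₃)))
    (hm3 : m₃ = (z₃ - a) * (z₃ - b) / ((z₃ - z₁) * (z₃ - z₂)))
    (hsum : m₁ + m₂ ≠ 0)
    (hζ : ζ₃ = (m₁ * z₂ + m₂ * z₁) / (m₁ + m₂))
    (hb1 : b ≠ z₁) (hb2 : b ≠ z₂) (hb3 : b ≠ z₃)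
    (hm3ne : m₃ ≠ 1) :
    ζ₃ - b = m₃ / (1 - m₃) * ((b - z₁) * (b - z₂) / (b - z₃)) :=
  stmt_7_general a b z₁ z₂ z₃ m₁ m₂ m₃ ζ₃ h12 h13 h23 hm1 hm2 hm3 hsum hζ hb3
end

section
/- Under the stated setup, if additionally a is distinct from z₁, z₂ and z₃ and m₃ ≠ 1, then ζ₃ − a = (m₃/(1 − m₃)) · ( −λ(1 − |a|²)(1 − conj(b)·a)/(a − z₃)² ). -/
/-! Both `m₁ + m₂ + m₃ = 1` and the formula for `ζ₃ - a` come from Lagrange interpolation of the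
monic quadratic `q z = (z - a)(z - b)` at the nodes `z₁, z₂, z₃`: the `mᵢ` are the coefficients
`q zᵢ / ∏ⱼ≠ᵢ (zᵢ - zⱼ)`, whose sum is the leading coefficient of `q`, and interpolating at the root
`a` of `q` gives a linear relation between them. Evaluating the cubic identity at `z = a` turns
`(a - z₁)(a - z₂)(a - z₃)` into `-λ(1 - |a|²)(1 - conj(b) a)`. -/

open Complex

section Interpolation

variable {K : Type*} [Field K] {a b z₁ z₂ z₃ : K}

theorem quadratic_lagrange_coeff_sum (h12 : z₁ ≠ z₂) (h13 : z₁ ≠ z₃) (h23 : z₂ ≠ z₃) :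
    (z₁ - a) * (z₁ - b) / ((z₁ - z₂) * (z₁ - z₃)) + (z₂ - a) * (z₂ - b) / ((z₂ - z₁) * (z₂ - z₃))
      + (z₃ - a) * (z₃ - b) / ((z₃ - z₁) * (z₃ - z₂)) = 1 := by
  field_simp [sub_ne_zero.mpr h12, sub_ne_zero.mpr h13, sub_ne_zero.mpr h23]
  ring

theorem quadratic_lagrange_interpolation_s8 (h12 : z₁ ≠ z₂) (h13 : z₁ ≠ z₃) (h23 : z₂ ≠ z₃) (x : K) :
    (z₁ - a) * (z₁ - b) / ((z₁ - z₂) * (z₁ - z₃)) * (x - z₂) * (x - z₃)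
      + (z₂ - a) * (z₂ - b) / ((z₂ - z₁) * (z₂ - z₃)) * (x - z₁) * (x - z₃)
      + (z₃ - a) * (z₃ - b) / ((z₃ - z₁) * (z₃ - z₂)) * (x - z₁) * (x - z₂)
      = (x - a) * (x - b) := by
  field_simp [sub_ne_zero.mpr h12, sub_ne_zero.mpr h13, sub_ne_zero.mpr h23]
  ring

theorem weighted_mean_sub_eq {m₁ m₂ m₃ : K} (hsum : m₁ + m₂ + m₃ = 1) (hm : m₁ + m₂ ≠ 0)
    (ha3 : a ≠ z₃)
    (hrel : m₁ * (a - z₂) * (a - z₃) + m₂ * (a - z₁) * (a - z₃) + m₃ * (a - z₁) * (a - z₂) = 0) :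
    (m₁ * z₂ + m₂ * z₁) / (m₁ + m₂) - a
      = m₃ / (1 - m₃) * ((a - z₁) * (a - z₂) * (a - z₃) / (a - z₃) ^ 2) := by
  rw [show 1 - m₃ = m₁ + m₂ by linear_combination -hsum]
  field_simp [sub_ne_zero.mpr ha3]
  linear_combination -hrel

end Interpolation

theorem stmt_8_general (a b lam z₁ z₂ z₃ m₁ m₂ m₃ ζ₃ : ℂ)
    (h12 : z₁ ≠ z₂) (h13 : z₁ ≠ z₃) (h23 : z₂ ≠ z₃)
    (hP : ∀ z : ℂ,
      z * (z - a) * (z - b) - lam * (1 - (starRingEnd ℂ) a * z) * (1 - (starRingEnd ℂ) b * z)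
        = (z - z₁) * (z - z₂) * (z - z₃))
    (hm1 : m₁ = (z₁ - a) * (z₁ - b) / ((z₁ - z₂) * (z₁ - z₃)))
    (hm2 : m₂ = (z₂ - a) * (z₂ - b) / ((z₂ - z₁) * (z₂ - z₃)))
    (hm3 : m₃ = (z₃ - a) * (z₃ - b) / ((z₃ - z₁) * (z₃ - z₂)))
    (hsum : m₁ + m₂ ≠ 0)
    (hζ : ζ₃ = (m₁ * z₂ + m₂ * z₁) / (m₁ + m₂))
    (ha3 : a ≠ z₃) :
    ζ₃ - a = m₃ / (1 - m₃) * (-(lam * (1 - (‖a‖ : ℂ) ^ 2) * (1 - (starRingEnd ℂ) b * a)) / (a - z₃) ^ 2) := by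
  have hcoeff : m₁ + m₂ + m₃ = 1 := by
    rw [hm1, hm2, hm3]
    exact quadratic_lagrange_coeff_sum h12 h13 h23
  have hrel : m₁ * (a - z₂) * (a - z₃) + m₂ * (a - z₁) * (a - z₃) + m₃ * (a - z₁) * (a - z₂) = 0 := by
    rw [hm1, hm2, hm3, quadratic_lagrange_interpolation_s8 h12 h13 h23 a, sub_self, zero_mul]
  have hroots : (a - z₁) * (a - z₂) * (a - z₃)
      = -(lam * (1 - (‖a‖ : ℂ) ^ 2) * (1 - (starRingEnd ℂ) b * a)) := by
    rw [← conj_mul']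
    linear_combination -hP a
  rw [hζ, weighted_mean_sub_eq hcoeff hsum ha3 hrel, hroots]

theorem stmt_8 (a b lam z₁ z₂ z₃ m₁ m₂ m₃ ζ₃ : ℂ)
    (hlam : ‖lam‖ = 1)
    (h12 : z₁ ≠ z₂) (h13 : z₁ ≠ z₃) (h23 : z₂ ≠ z₃)
    (hz1 : ‖z₁‖ = 1) (hz2 : ‖z₂‖ = 1) (hz3 : ‖z₃‖ = 1)
    (hP : ∀ z : ℂ,
      z * (z - a) * (z - b) - lam * (1 - (starRingEnd ℂ) a * z) * (1 - (starRingEnd ℂ) b * z)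
        = (z - z₁) * (z - z₂) * (z - z₃))
    (hm1 : m₁ = (z₁ - a) * (z₁ - b) / ((z₁ - z₂) * (z₁ - z₃)))
    (hm2 : m₂ = (z₂ - a) * (z₂ - b) / ((z₂ - z₁) * (z₂ - z₃)))
    (hm3 : m₃ = (z₃ - a) * (z₃ - b) / ((z₃ - z₁) * (z₃ - z₂)))
    (hsum : m₁ + m₂ ≠ 0)
    (hζ : ζ₃ = (m₁ * z₂ + m₂ * z₁) / (m₁ + m₂))
    (ha1 : a ≠ z₁) (ha2 : a ≠ z₂) (ha3 : a ≠ z₃)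
    (hm3ne : m₃ ≠ 1) :
    ζ₃ - a = m₃ / (1 - m₃) * (-(lam * (1 - (‖a‖ : ℂ) ^ 2) * (1 - (starRingEnd ℂ) b * a)) / (a - z₃) ^ 2) :=
  stmt_8_general a b lam z₁ z₂ z₃ m₁ m₂ m₃ ζ₃ h12 h13 h23 hP hm1 hm2 hm3 hsum hζ ha3
end

section
/- Under the stated setup, if additionally b is distinct from z₁, z₂ and z₃ and m₃ ≠ 1, then ζ₃ − b = (m₃/(1 − m₃)) · ( −λ(1 − |b|²)(1 − conj(a)·b)/(b − z₃)² ). -/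
/-!
The numbers `mᵢ` are the residues of `(z - a)(z - b) / ((z - z₁)(z - z₂)(z - z₃))`, i.e. the
Lagrange coefficients of the monic quadratic `(z - a)(z - b)` at the nodes `zᵢ`. Hence
`m₁ + m₂ + m₃ = 1`, and interpolating at `z = b` gives `∑ mᵢ ∏_{j ≠ i} (b - zⱼ) = 0`. These two
relations express `ζ₃ - b` through `m₃` and `(b - z₁)(b - z₂)(b - z₃) = P_λ(b)`, and evaluating the
defining formula of `P_λ` at `b` gives `P_λ(b) = -λ(1 - |b|²)(1 - conj(a) b)`.
-/

open Complex

section Lagrange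

variable {K : Type*} [Field K] {z₁ z₂ z₃ : K}

theorem lagrange_quadratic_interpolation (h12 : z₁ ≠ z₂) (h13 : z₁ ≠ z₃) (h23 : z₂ ≠ z₃)
    (a b w : K) :
    (z₁ - a) * (z₁ - b) / ((z₁ - z₂) * (z₁ - z₃)) * ((w - z₂) * (w - z₃))
      + (z₂ - a) * (z₂ - b) / ((z₂ - z₁) * (z₂ - z₃)) * ((w - z₁) * (w - z₃))
      + (z₃ - a) * (z₃ - b) / ((z₃ - z₁) * (z₃ - z₂)) * ((w - z₁) * (w - z₂))
      = (w - a) * (w - b) := by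
  have := sub_ne_zero.mpr h12
  have := sub_ne_zero.mpr h13
  have := sub_ne_zero.mpr h23
  have := sub_ne_zero.mpr h12.symm
  have := sub_ne_zero.mpr h13.symm
  have := sub_ne_zero.mpr h23.symm
  field_simp
  ring

theorem lagrange_quadratic_sum_eq_one (h12 : z₁ ≠ z₂) (h13 : z₁ ≠ z₃) (h23 : z₂ ≠ z₃)
    (a b : K) :
    (z₁ - a) * (z₁ - b) / ((z₁ - z₂) * (z₁ - z₃))
      + (z₂ - a) * (z₂ - b) / ((z₂ - z₁) * (z₂ - z₃))
      + (z₃ - a) * (z₃ - b) / ((z₃ - z₁) * (z₃ - z₂)) = 1 := by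
  have := sub_ne_zero.mpr h12
  have := sub_ne_zero.mpr h13
  have := sub_ne_zero.mpr h23
  have := sub_ne_zero.mpr h12.symm
  have := sub_ne_zero.mpr h13.symm
  have := sub_ne_zero.mpr h23.symm
  field_simp
  ring

end Lagrange

theorem weighted_mean_sub_eq_of_interpolation {K : Type*} [Field K] {m₁ m₂ m₃ z₁ z₂ z₃ b : K}
    (hsum : m₁ + m₂ + m₃ = 1) (hm : m₁ + m₂ ≠ 0) (hb : b ≠ z₃)
    (hinterp : m₁ * ((b - z₂) * (b - z₃)) + m₂ * ((b - z₁) * (b - z₃))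
      + m₃ * ((b - z₁) * (b - z₂)) = 0) :
    (m₁ * z₂ + m₂ * z₁) / (m₁ + m₂) - b
      = m₃ / (1 - m₃) * ((b - z₁) * (b - z₂) * (b - z₃) / (b - z₃) ^ 2) := by
  have hb' : b - z₃ ≠ 0 := sub_ne_zero.mpr hb
  rw [← hsum, add_sub_cancel_right]
  field_simp
  linear_combination -hinterp

theorem sub_mul_sub_mul_sub_eq_of_forall_cubic_eq {a b lam z₁ z₂ z₃ : ℂ}
    (hP : ∀ z : ℂ,
      z * (z - a) * (z - b) - lam * (1 - (starRingEnd ℂ) a * z) * (1 - (starRingEnd ℂ) b * z)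
        = (z - z₁) * (z - z₂) * (z - z₃)) :
    (b - z₁) * (b - z₂) * (b - z₃)
      = -(lam * (1 - (‖b‖ : ℂ) ^ 2) * (1 - (starRingEnd ℂ) a * b)) := by
  have hnorm : (‖b‖ : ℂ) ^ 2 = (starRingEnd ℂ) b * b := by
    rw [mul_comm, mul_conj, normSq_eq_norm_sq, ofReal_pow]
  rw [hnorm, ← hP b]
  ring

theorem stmt_9_general (a b lam z₁ z₂ z₃ m₁ m₂ m₃ ζ₃ : ℂ)
    (h12 : z₁ ≠ z₂) (h13 : z₁ ≠ z₃) (h23 : z₂ ≠ z₃)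
    (hP : ∀ z : ℂ,
      z * (z - a) * (z - b) - lam * (1 - (starRingEnd ℂ) a * z) * (1 - (starRingEnd ℂ) b * z)
        = (z - z₁) * (z - z₂) * (z - z₃))
    (hm1 : m₁ = (z₁ - a) * (z₁ - b) / ((z₁ - z₂) * (z₁ - z₃)))
    (hm2 : m₂ = (z₂ - a) * (z₂ - b) / ((z₂ - z₁) * (z₂ - z₃)))
    (hm3 : m₃ = (z₃ - a) * (z₃ - b) / ((z₃ - z₁) * (z₃ - z₂)))
    (hsum : m₁ + m₂ ≠ 0)
    (hζ : ζ₃ = (m₁ * z₂ + m₂ * z₁) / (m₁ + m₂))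
    (hb3 : b ≠ z₃) :
    ζ₃ - b = m₃ / (1 - m₃) * (-(lam * (1 - (‖b‖ : ℂ) ^ 2) * (1 - (starRingEnd ℂ) a * b)) / (b - z₃) ^ 2) := by
  have hone : m₁ + m₂ + m₃ = 1 := by
    subst hm1 hm2 hm3
    exact lagrange_quadratic_sum_eq_one h12 h13 h23 a b
  have hinterp : m₁ * ((b - z₂) * (b - z₃)) + m₂ * ((b - z₁) * (b - z₃))
      + m₃ * ((b - z₁) * (b - z₂)) = 0 := by
    subst hm1 hm2 hm3
    simpa using lagrange_quadratic_interpolation h12 h13 h23 a b b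
  rw [hζ, ← sub_mul_sub_mul_sub_eq_of_forall_cubic_eq hP]
  exact weighted_mean_sub_eq_of_interpolation hone hsum hb3 hinterp

theorem stmt_9 (a b lam z₁ z₂ z₃ m₁ m₂ m₃ ζ₃ : ℂ)
    (hlam : ‖lam‖ = 1)
    (h12 : z₁ ≠ z₂) (h13 : z₁ ≠ z₃) (h23 : z₂ ≠ z₃)
    (hz1 : ‖z₁‖ = 1) (hz2 : ‖z₂‖ = 1) (hz3 : ‖z₃‖ = 1)
    (hP : ∀ z : ℂ,
      z * (z - a) * (z - b) - lam * (1 - (starRingEnd ℂ) a * z) * (1 - (starRingEnd ℂ) b * z)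
        = (z - z₁) * (z - z₂) * (z - z₃))
    (hm1 : m₁ = (z₁ - a) * (z₁ - b) / ((z₁ - z₂) * (z₁ - z₃)))
    (hm2 : m₂ = (z₂ - a) * (z₂ - b) / ((z₂ - z₁) * (z₂ - z₃)))
    (hm3 : m₃ = (z₃ - a) * (z₃ - b) / ((z₃ - z₁) * (z₃ - z₂)))
    (hsum : m₁ + m₂ ≠ 0)
    (hζ : ζ₃ = (m₁ * z₂ + m₂ * z₁) / (m₁ + m₂))
    (hb1 : b ≠ z₁) (hb2 : b ≠ z₂) (hb3 : b ≠ z₃)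
    (hm3ne : m₃ ≠ 1) :
    ζ₃ - b = m₃ / (1 - m₃) * (-(lam * (1 - (‖b‖ : ℂ) ^ 2) * (1 - (starRingEnd ℂ) a * b)) / (b - z₃) ^ 2) :=
  stmt_9_general a b lam z₁ z₂ z₃ m₁ m₂ m₃ ζ₃ h12 h13 h23 hP hm1 hm2 hm3 hsum hζ hb3
end

section
/- If P ∈ ℂ[z] is a self-inversive polynomial of odd degree n, then P has at least one zero on the unit circle: there exists z ∈ ℂ with |z| = 1 and P(z) = 0. -/
/-!
If `P = λ zⁿ conj (P (1 / conj z))`, then `P = λ P*` for the conjugate reciprocal polynomial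
`P* = (map conj P).reverse`. Comparing constant terms gives `P 0 ≠ 0` (this matters: the map
`z ↦ (conj z)⁻¹` fixes `0` since `0⁻¹ = 0`), and comparing roots shows
that the multiset of roots of `P` is invariant under the reflection `z ↦ 1 / conj z` in the unit
circle. This reflection is an involution whose only fixed points on `ℂ \ {0}` are the points of
the unit circle, so if no root lies on the circle the roots pair up and `n` is even.
-/

open Polynomial ComplexConjugate

theorem Multiset.even_card_of_map_eq_self {α : Type*} {f : α → α} (hf : Function.Involutive f)
    {s : Multiset α} (hs : s.map f = s) (hfix : ∀ x ∈ s, f x ≠ x) : Even (card s) := by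
  classical
  have hcount (x : α) : s.count (f x) = s.count x := by
    conv_lhs => rw [← hs]
    exact count_map_eq_count' f s hf.injective x
  rw [← ZMod.natCast_eq_zero_iff_even, ← toFinset_sum_count_eq, Nat.cast_sum]
  refine Finset.sum_involution (fun x _ => f x) (fun x _ => ?_)
    (fun x hx _ => hfix x (mem_toFinset.1 hx)) (fun x hx => ?_) (fun x _ => hf x)
  · rw [hcount]; exact CharTwo.add_self_eq_zero _
  · rw [mem_toFinset] at hx ⊢
    rw [← hs]
    exact mem_map_of_mem f hx

theorem Complex.norm_eq_one_of_conj_inv_eq {x : ℂ} (hx : x ≠ 0) (h : (conj x)⁻¹ = x) :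
    ‖x‖ = 1 := by
  have hconj : conj x ≠ 0 := (_root_.map_ne_zero _).2 hx
  have hsq : ((‖x‖ ^ 2 : ℝ) : ℂ) = 1 := by
    calc ((‖x‖ ^ 2 : ℝ) : ℂ) = x * conj x := by push_cast; exact (mul_conj' x).symm
      _ = (conj x)⁻¹ * conj x := by rw [h]
      _ = 1 := inv_mul_cancel₀ hconj
  exact (pow_eq_one_iff_of_nonneg (norm_nonneg x) two_ne_zero).1 (by exact_mod_cast hsq)

theorem Complex.involutive_conj_inv : Function.Involutive fun z : ℂ => (conj z)⁻¹ := fun z => by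
  simp [map_inv₀]

namespace Polynomial

theorem reverse_multiset_prod {R : Type*} [CommSemiring R] [NoZeroDivisors R]
    (s : Multiset R[X]) : s.prod.reverse = (s.map reverse).prod := by
  induction s using Multiset.induction with
  | empty => simpa using reverse_C (1 : R)
  | cons p s ih => simp [reverse_mul_of_domain, ih]

theorem reverse_X_sub_C {K : Type*} [Field K] {a : K} (ha : a ≠ 0) :
    (X - C a).reverse = C (-a) * (X - C a⁻¹) := by
  have hX : (X : K[X]).reverse = 1 := by
    rw [← mul_one (X : K[X]), reverse_X_mul, ← C_1, reverse_C]
  rw [sub_eq_add_neg, ← C_neg, reverse_add_C, hX, natDegree_X, pow_one, mul_sub, ← C_mul,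
    neg_mul, mul_inv_cancel₀ ha]
  simp only [C_neg, C_1]
  ring

theorem Splits.roots_reverse {K : Type*} [Field K] {Q : K[X]} (hQ : Q.Splits)
    (h0 : Q.coeff 0 ≠ 0) : Q.reverse.roots = Q.roots.map (·⁻¹) := by
  have hQ0 : Q ≠ 0 := by rintro rfl; simp at h0
  have hroot_ne (a : K) (ha : a ∈ Q.roots) : a ≠ 0 := by
    rintro rfl
    rw [mem_roots hQ0, IsRoot, ← coeff_zero_eq_eval_zero] at ha
    exact h0 ha
  conv_lhs => rw [hQ.eq_prod_roots]
  rw [reverse_mul_of_domain, reverse_C, reverse_multiset_prod, Multiset.map_map,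
    roots_C_mul _ (leadingCoeff_ne_zero.2 hQ0), roots_multiset_prod _ (by simp [X_sub_C_ne_zero]),
    Multiset.bind_map, ← Multiset.bind_singleton]
  refine Multiset.bind_congr fun a ha => ?_
  rw [Function.comp_apply, reverse_X_sub_C (hroot_ne a ha),
    roots_C_mul _ (neg_ne_zero.2 (hroot_ne a ha)), roots_X_sub_C]

noncomputable def conjReverse (P : ℂ[X]) : ℂ[X] := (P.map conj).reverse

theorem eval_conjReverse (P : ℂ[X]) {z : ℂ} (hz : z ≠ 0) :
    P.conjReverse.eval z = z ^ P.natDegree * conj (P.eval (conj z)⁻¹) := by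
  unfold conjReverse
  let : Invertible z⁻¹ := invertibleOfNonzero (inv_ne_zero hz)
  have h := eval₂_reverse_mul_pow (RingHom.id ℂ) z⁻¹ (P.map conj)
  rw [invOf_eq_inv, inv_inv, natDegree_map_eq_of_injective (RingHom.injective _), ← eval,
    ← eval, eval_map] at h
  calc (P.map conj).reverse.eval z
      = z ^ P.natDegree * ((P.map conj).reverse.eval z * z⁻¹ ^ P.natDegree) := by
        rw [mul_left_comm, ← mul_pow, mul_inv_cancel₀ hz, one_pow, mul_one]
    _ = z ^ P.natDegree * conj (P.eval (conj z)⁻¹) := by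
      rw [h, ← eval₂_at_apply, map_inv₀, Complex.conj_conj]

theorem eq_C_mul_conjReverse {P : ℂ[X]} {lam : ℂ}
    (hsi : ∀ z : ℂ, z ≠ 0 → P.eval z = lam * z ^ P.natDegree * conj (P.eval (conj z)⁻¹)) :
    P = C lam * P.conjReverse :=
  eq_of_infinite_eval_eq _ _ <| (Set.finite_singleton 0).infinite_compl.mono fun z hz => by
    simp only [Set.mem_ofPred_eq, eval_mul, eval_C, eval_conjReverse P hz, hsi z hz, mul_assoc]

theorem coeff_zero_ne_zero_of_eq_C_mul_conjReverse {P : ℂ[X]} {lam : ℂ} (hP : P ≠ 0)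
    (h : P = C lam * P.conjReverse) : P.coeff 0 ≠ 0 := by
  have hlam : lam ≠ 0 := by
    rintro rfl
    rw [C_0, zero_mul] at h
    exact hP h
  rw [h, coeff_C_mul, conjReverse, coeff_zero_reverse]
  exact mul_ne_zero hlam <|
    leadingCoeff_ne_zero.2 ((Polynomial.map_ne_zero_iff (RingHom.injective _)).2 hP)

theorem roots_map_conj_inv_of_eq_C_mul_conjReverse {P : ℂ[X]} {lam : ℂ}
    (h0 : P.coeff 0 ≠ 0) (h : P = C lam * P.conjReverse) :
    P.roots.map (fun z => (conj z)⁻¹) = P.roots := by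
  have hlam : lam ≠ 0 := by
    rintro rfl
    rw [h, C_0, zero_mul, coeff_zero] at h0
    exact h0 rfl
  have hQ0 : (P.map conj).coeff 0 ≠ 0 := by simpa [coeff_map] using h0
  conv_rhs => rw [h]
  rw [roots_C_mul _ hlam, conjReverse, (IsAlgClosed.splits _).roots_reverse hQ0,
    (IsAlgClosed.splits P).roots_map_of_injective (RingHom.injective _), Multiset.map_map]
  rfl

end Polynomial

theorem stmt_14_general (P : Polynomial ℂ) (hodd : Odd P.natDegree) (lam : ℂ)
    (hsi : ∀ z : ℂ, z ≠ 0 →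
      P.eval z = lam * z ^ P.natDegree * (starRingEnd ℂ) (P.eval (((starRingEnd ℂ) z)⁻¹))) :
    ∃ z : ℂ, ‖z‖ = 1 ∧ P.eval z = 0 := by
  by_contra! hcon
  have hP : P ≠ 0 := by
    rintro rfl
    simp at hodd
  have hrefl := eq_C_mul_conjReverse hsi
  have h0 := coeff_zero_ne_zero_of_eq_C_mul_conjReverse hP hrefl
  have hfree (x : ℂ) (hx : x ∈ P.roots) : (conj x)⁻¹ ≠ x := by
    have hroot : P.eval x = 0 := (mem_roots hP).1 hx
    have hx0 : x ≠ 0 := by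
      rintro rfl
      exact h0 (by rwa [coeff_zero_eq_eval_zero])
    exact fun hfix => hcon x (Complex.norm_eq_one_of_conj_inv_eq hx0 hfix) hroot
  have heven := Multiset.even_card_of_map_eq_self Complex.involutive_conj_inv
    (roots_map_conj_inv_of_eq_C_mul_conjReverse h0 hrefl) hfree
  rw [← (IsAlgClosed.splits P).natDegree_eq_card_roots] at heven
  exact Nat.not_even_iff_odd.2 hodd heven

theorem stmt_14 (P : Polynomial ℂ) (hodd : Odd P.natDegree) (lam : ℂ)
    (hlam : ‖lam‖ = 1)
    (hsi : ∀ z : ℂ, z ≠ 0 →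
      P.eval z = lam * z ^ P.natDegree * (starRingEnd ℂ) (P.eval (((starRingEnd ℂ) z)⁻¹))) :
    ∃ z : ℂ, ‖z‖ = 1 ∧ P.eval z = 0 :=
  stmt_14_general P hodd lam hsi
end

section
/- Let a, b, λ ∈ ℂ with |a| < 1, |b| < 1 and |λ| = 1. Then every root of the cubic P_λ(z) = z(z − a)(z − b) − λ(1 − conj(a)z)(1 − conj(b)z) lies on the unit circle: if P_λ(z) = 0 then |z| = 1. -/
/-! Since `‖1 - conj a * z‖² - ‖z - a‖² = (1 - ‖a‖²)(1 - ‖z‖²)`, for `‖a‖ < 1` the Blaschke factor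
`(z - a) / (1 - conj a * z)` has modulus `< 1` inside the unit disc and `> 1` outside it. A root
of `P_λ` satisfies `‖z‖ ‖z - a‖ ‖z - b‖ = ‖1 - conj a * z‖ ‖1 - conj b * z‖`; for `‖z‖ < 1` every
factor on the left is smaller than its partner on the right, and for `‖z‖ > 1` every one is larger. -/

open Complex ComplexConjugate

namespace Complex

theorem sq_norm_one_sub_conj_mul_sub_sq_norm_sub (a z : ℂ) :
    ‖1 - conj a * z‖ ^ 2 - ‖z - a‖ ^ 2 = (1 - ‖a‖ ^ 2) * (1 - ‖z‖ ^ 2) := by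
  simp only [Complex.sq_norm, normSq_apply, sub_re, sub_im, mul_re, mul_im, conj_re, conj_im, one_re,
    one_im]
  ring

variable {a z : ℂ}

theorem norm_sub_lt_norm_one_sub_conj_mul (ha : ‖a‖ < 1) (hz : ‖z‖ < 1) :
    ‖z - a‖ < ‖1 - conj a * z‖ := by
  have h : 0 < (1 - ‖a‖ ^ 2) * (1 - ‖z‖ ^ 2) :=
    mul_pos (by nlinarith [norm_nonneg a]) (by nlinarith [norm_nonneg z])
  rw [← sq_lt_sq₀ (norm_nonneg _) (norm_nonneg _)]
  linarith [sq_norm_one_sub_conj_mul_sub_sq_norm_sub a z]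

theorem norm_one_sub_conj_mul_lt_norm_sub (ha : ‖a‖ < 1) (hz : 1 < ‖z‖) :
    ‖1 - conj a * z‖ < ‖z - a‖ := by
  have h : (1 - ‖a‖ ^ 2) * (1 - ‖z‖ ^ 2) < 0 :=
    mul_neg_of_pos_of_neg (by nlinarith [norm_nonneg a]) (by nlinarith)
  rw [← sq_lt_sq₀ (norm_nonneg _) (norm_nonneg _)]
  linarith [sq_norm_one_sub_conj_mul_sub_sq_norm_sub a z]

end Complex

theorem stmt_15 (a b lam : ℂ) (ha : ‖a‖ < 1) (hb : ‖b‖ < 1)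
    (hlam : ‖lam‖ = 1) (z : ℂ)
    (hroot : z * (z - a) * (z - b)
        - lam * (1 - (starRingEnd ℂ) a * z) * (1 - (starRingEnd ℂ) b * z) = 0) :
    ‖z‖ = 1 := by
  have hnorm : ‖z‖ * (‖z - a‖ * ‖z - b‖)
      = ‖1 - (starRingEnd ℂ) a * z‖ * ‖1 - (starRingEnd ℂ) b * z‖ := by
    simpa [mul_assoc, hlam] using congrArg (‖·‖) (sub_eq_zero.mp hroot)
  rcases lt_trichotomy ‖z‖ 1 with hz | hz | hz
  · have hlt := mul_lt_mul'' (norm_sub_lt_norm_one_sub_conj_mul ha hz)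
      (norm_sub_lt_norm_one_sub_conj_mul hb hz) (norm_nonneg _) (norm_nonneg _)
    have hle : ‖z‖ * (‖z - a‖ * ‖z - b‖) ≤ ‖z - a‖ * ‖z - b‖ :=
      mul_le_of_le_one_left (by positivity) hz.le
    linarith
  · exact hz
  · have hlt := mul_lt_mul'' (norm_one_sub_conj_mul_lt_norm_sub ha hz)
      (norm_one_sub_conj_mul_lt_norm_sub hb hz) (norm_nonneg _) (norm_nonneg _)
    have hle : ‖z - a‖ * ‖z - b‖ ≤ ‖z‖ * (‖z - a‖ * ‖z - b‖) :=
      le_mul_of_one_le_left (by positivity) hz.le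
    linarith
end
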